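/- arXiv:1206.6093 — 2 statements merged into one kernel-verified Lean document; each statement's English description precedes it below -/
import Mathlib

section
/- Let T₁ = U⊗I and T₂ = I⊗U be the unitary operators on H⊗H induced by a unitary U on H. Suppose a bounded operator J : H₀ → H⊗H satisfies J + (T₁T₂)J = T₁J + T₂J. Then for every n ≥ 1, J + (T₁T₂)ⁿJ = T₁ⁿJ + T₂ⁿJ. -/
/-- Let `T₁ = U⊗I` and `T₂ = I⊗U` be the commuting unitary operators on the
Hilbert space `E = H⊗H` induced by a unitary `U` on `H` (modelled here by two commuting
unitaries `T₁`, `T₂` on a Hilbert space `E`).  If a bounded operator `J : H₀ → E` satisfies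
`J + (T₁T₂)J = T₁J + T₂J`, then for every `n ≥ 1`, `J + (T₁T₂)ⁿJ = T₁ⁿJ + T₂ⁿJ`. -/
theorem stmt5
    {E H₀ : Type*} [NormedAddCommGroup E] [InnerProductSpace ℂ E] [CompleteSpace E]
    [NormedAddCommGroup H₀] [InnerProductSpace ℂ H₀] [CompleteSpace H₀]
    (T₁ T₂ : E →L[ℂ] E)
    (hT₁ : T₁ ∈ unitary (E →L[ℂ] E)) (hT₂ : T₂ ∈ unitary (E →L[ℂ] E))
    (hcomm : T₁ * T₂ = T₂ * T₁)
    (J : H₀ →L[ℂ] E)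
    (hJ : J + (T₁ * T₂).comp J = T₁.comp J + T₂.comp J) :
    ∀ n : ℕ, 1 ≤ n →
      J + ((T₁ * T₂) ^ n).comp J = (T₁ ^ n).comp J + (T₂ ^ n).comp J := by
  intro n hn
  have hc : Commute T₁ T₂ := hcomm
  -- Step 1: the hypothesis says `(T₁ - 1)(T₂ - 1) ∘ J = 0`.
  have key : ((T₁ - 1) * (T₂ - 1)).comp J = 0 := by
    have hexp : (T₁ - 1) * (T₂ - 1) = T₁ * T₂ - T₁ - T₂ + 1 := by noncomm_ring
    rw [hexp, ContinuousLinearMap.add_comp, ContinuousLinearMap.sub_comp,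
      ContinuousLinearMap.sub_comp, ContinuousLinearMap.one_def,
      ContinuousLinearMap.id_comp]
    have h2 : (T₁ * T₂).comp J - T₁.comp J - T₂.comp J + J
        = (J + (T₁ * T₂).comp J) - (T₁.comp J + T₂.comp J) := by abel
    rw [h2, hJ, sub_self]
  -- Step 2: factor `(T₁^n - 1)(T₂^n - 1)` through `(T₁-1)(T₂-1)`.
  have c1 : Commute (T₁ - 1) (∑ i ∈ Finset.range n, T₂ ^ i) :=
    Commute.sum_right _ _ _ fun i _ => (hc.pow_right i).sub_left (Commute.one_left _)
  have hfac : (T₁ ^ n - 1) * (T₂ ^ n - 1)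
      = ((∑ i ∈ Finset.range n, T₁ ^ i) * (∑ i ∈ Finset.range n, T₂ ^ i))
        * ((T₁ - 1) * (T₂ - 1)) := by
    rw [← geom_sum_mul, ← geom_sum_mul]
    calc (∑ i ∈ Finset.range n, T₁ ^ i) * (T₁ - 1)
          * ((∑ i ∈ Finset.range n, T₂ ^ i) * (T₂ - 1))
        = (∑ i ∈ Finset.range n, T₁ ^ i)
          * ((T₁ - 1) * (∑ i ∈ Finset.range n, T₂ ^ i)) * (T₂ - 1) := by
          simp [mul_assoc]
      _ = (∑ i ∈ Finset.range n, T₁ ^ i)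
          * ((∑ i ∈ Finset.range n, T₂ ^ i) * (T₁ - 1)) * (T₂ - 1) := by
          rw [c1.eq]
      _ = ((∑ i ∈ Finset.range n, T₁ ^ i) * (∑ i ∈ Finset.range n, T₂ ^ i))
          * ((T₁ - 1) * (T₂ - 1)) := by
          simp [mul_assoc]
  -- Step 3: hence `(T₁^n - 1)(T₂^n - 1) ∘ J = 0`.
  have zero2 : ((T₁ ^ n - 1) * (T₂ ^ n - 1)).comp J = 0 := by
    rw [hfac]
    have : (((∑ i ∈ Finset.range n, T₁ ^ i) * (∑ i ∈ Finset.range n, T₂ ^ i))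
        * ((T₁ - 1) * (T₂ - 1))).comp J
        = ((∑ i ∈ Finset.range n, T₁ ^ i) * (∑ i ∈ Finset.range n, T₂ ^ i)).comp
          (((T₁ - 1) * (T₂ - 1)).comp J) := rfl
    rw [this, key, ContinuousLinearMap.comp_zero]
  -- Step 4: expand and conclude.
  have hexp2 : (T₁ ^ n - 1) * (T₂ ^ n - 1) = T₁ ^ n * T₂ ^ n - T₁ ^ n - T₂ ^ n + 1 := by
    noncomm_ring
  rw [hexp2, ContinuousLinearMap.add_comp, ContinuousLinearMap.sub_comp,
    ContinuousLinearMap.sub_comp, ContinuousLinearMap.one_def,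
    ContinuousLinearMap.id_comp] at zero2
  rw [hc.mul_pow, ← sub_eq_zero, ← zero2]
  abel
end

section
/- Let T be an ergodic invertible measure-preserving transformation of a probability space, and suppose for some a ∈ (0,1) and some sequence kᵢ → ∞, the Koopman operators satisfy T̂^{kᵢ} → aI + (1−a)T̂ in the weak operator topology. Then T is weakly mixing, i.e., the only eigenfunctions of T̂ in L² are the constant functions. -/
open MeasureTheory Filter Topology
open scoped InnerProductSpace ComplexConjugate

/-!
An eigenvalue `c` of the unitary `Uop` lies on the unit circle, and pairing `Uop ^ kᵢ f = c ^ kᵢ • f`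
with `f` turns the weak convergence into `c̄ ^ kᵢ → a + (1 - a) c̄`. The limit of unimodular numbers
is unimodular, but by strict convexity of the disc a proper convex combination of `1` and a point
`c̄ ≠ 1` of the circle lies strictly inside it; hence `c = 1`. So every eigenfunction is invariant,
and ergodicity makes it constant.
-/

lemma eq_of_norm_combo_eq {E : Type*} [NormedAddCommGroup E] [NormedSpace ℝ E]
    [StrictConvexSpace ℝ E] {x y : E} {r a b : ℝ} (hx : ‖x‖ ≤ r) (hy : ‖y‖ ≤ r)
    (ha : 0 < a) (hb : 0 < b) (hab : a + b = 1) (h : ‖a • x + b • y‖ = r) : x = y := by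
  by_contra hne
  exact (norm_combo_lt_of_ne hx hy hne ha hb hab).ne h

lemma norm_eq_one_of_apply_eq_smul {𝕜 E : Type*} [NormedField 𝕜] [NormedAddCommGroup E]
    [NormedSpace 𝕜 E] {U : E →L[𝕜] E} (hU : ∀ x, ‖U x‖ = ‖x‖) {f : E} {c : 𝕜}
    (hf : U f = c • f) (hf0 : f ≠ 0) : ‖c‖ = 1 := by
  have h := hU f
  rw [hf, norm_smul] at h
  exact (mul_eq_right₀ (norm_ne_zero_iff.mpr hf0)).mp h

lemma pow_apply_of_apply_eq_smul {R M : Type*} [CommSemiring R] [TopologicalSpace M]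
    [AddCommMonoid M] [Module R M] [ContinuousConstSMul R M] {U : M →L[R] M} {f : M} {c : R}
    (hf : U f = c • f) (n : ℕ) : (U ^ n) f = c ^ n • f := by
  induction n with
  | zero => simp
  | succ n ih => rw [pow_succ', mul_apply_eq_comp, ih, map_smul, hf, smul_smul, pow_succ]

lemma eigenvalue_eq_one_of_tendsto_inner_pow {E : Type*} [NormedAddCommGroup E]
    [InnerProductSpace ℂ E] [CompleteSpace E] {U : E →L[ℂ] E} (hU : U ∈ unitary (E →L[ℂ] E))
    {a : ℝ} (ha : 0 < a) (ha1 : a < 1) {k : ℕ → ℕ} {f : E} {c : ℂ}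
    (hlim : Tendsto (fun i => ⟪(U ^ k i) f, f⟫_ℂ) atTop
      (𝓝 ((a : ℂ) * ⟪f, f⟫_ℂ + ((1 - a : ℝ) : ℂ) * ⟪U f, f⟫_ℂ)))
    (hf : U f = c • f) (hf0 : f ≠ 0) : c = 1 := by
  have hc : ‖conj c‖ = 1 := by
    rw [RCLike.norm_conj]
    exact norm_eq_one_of_apply_eq_smul (ContinuousLinearMap.norm_map_of_mem_unitary hU) hf hf0
  have hff : ⟪f, f⟫_ℂ ≠ 0 := inner_self_ne_zero.mpr hf0
  simp only [pow_apply_of_apply_eq_smul hf, hf, inner_smul_left, map_pow] at hlim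
  have hnorm : ‖(a : ℂ) + ((1 - a : ℝ) : ℂ) * conj c‖ * ‖⟪f, f⟫_ℂ‖ = ‖⟪f, f⟫_ℂ‖ := by
    have h := hlim.norm
    simp only [norm_mul, norm_pow, hc, one_pow, one_mul] at h
    rw [← norm_mul, add_mul, mul_assoc]
    exact tendsto_nhds_unique h tendsto_const_nhds
  have hcombo : ‖a • (1 : ℂ) + (1 - a) • conj c‖ = 1 := by
    simpa [Complex.real_smul] using (mul_eq_right₀ (norm_ne_zero_iff.mpr hff)).mp hnorm
  have hconj : (1 : ℂ) = conj c :=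
    eq_of_norm_combo_eq norm_one.le hc.le ha (sub_pos.mpr ha1) (add_sub_cancel a 1) hcombo
  simpa using congrArg conj hconj.symm

theorem stmt11_general
    {X : Type*} [MeasurableSpace X] (μ : Measure X) [IsProbabilityMeasure μ]
    (T : X ≃ᵐ X) (hTerg : Ergodic T μ)
    (Uop : Lp ℂ 2 μ →L[ℂ] Lp ℂ 2 μ) (hUopu : Uop ∈ unitary (Lp ℂ 2 μ →L[ℂ] Lp ℂ 2 μ))
    (hKoop : ∀ f : Lp ℂ 2 μ, (Uop f : X → ℂ) =ᵐ[μ] fun x => f (T x))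
    (a : ℝ) (ha : 0 < a) (ha1 : a < 1)
    (k : ℕ → ℕ)
    (hweak : ∀ f g : Lp ℂ 2 μ, Tendsto (fun i => ⟪(Uop ^ k i) f, g⟫_ℂ) atTop
      (𝓝 ((a : ℂ) * ⟪f, g⟫_ℂ + ((1 - a : ℝ) : ℂ) * ⟪Uop f, g⟫_ℂ))) :
    ∀ (f : Lp ℂ 2 μ) (c : ℂ), Uop f = c • f → f ≠ 0 →
      ∃ κ : ℂ, (f : X → ℂ) =ᵐ[μ] fun _ => κ := by
  intro f c hf hf0
  have hc : c = 1 := eigenvalue_eq_one_of_tendsto_inner_pow hUopu ha ha1 (hweak f f) hf hf0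
  have hinv : (f : X → ℂ) ∘ T =ᵐ[μ] f := by
    simpa [hf, hc, Function.comp_def] using (hKoop f).symm
  exact hTerg.ae_eq_const_of_ae_eq_comp_ae (Lp.aestronglyMeasurable f) hinv

/-- Let `T` be an ergodic invertible measure-preserving transformation of a
probability space and `Uop` its Koopman operator on `L²(μ)`.  If for some `a ∈ (0,1)` and a
sequence `kᵢ → ∞` we have `Uop^{kᵢ} → aI + (1−a)Uop` in the weak operator topology, then every
eigenfunction of `Uop` is a.e. constant (i.e. `T` is weakly mixing). -/
theorem stmt11
    {X : Type*} [MeasurableSpace X] (μ : Measure X) [IsProbabilityMeasure μ]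
    (T : X ≃ᵐ X) (hT : MeasurePreserving T μ μ) (hTerg : Ergodic T μ)
    (Uop : Lp ℂ 2 μ →L[ℂ] Lp ℂ 2 μ) (hUopu : Uop ∈ unitary (Lp ℂ 2 μ →L[ℂ] Lp ℂ 2 μ))
    (hKoop : ∀ f : Lp ℂ 2 μ, (Uop f : X → ℂ) =ᵐ[μ] fun x => f (T x))
    (a : ℝ) (ha : 0 < a) (ha1 : a < 1)
    (k : ℕ → ℕ) (hk : Tendsto k atTop atTop)
    (hweak : ∀ f g : Lp ℂ 2 μ, Tendsto (fun i => ⟪(Uop ^ k i) f, g⟫_ℂ) atTop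
      (𝓝 ((a : ℂ) * ⟪f, g⟫_ℂ + ((1 - a : ℝ) : ℂ) * ⟪Uop f, g⟫_ℂ))) :
    ∀ (f : Lp ℂ 2 μ) (c : ℂ), Uop f = c • f → f ≠ 0 →
      ∃ κ : ℂ, (f : X → ℂ) =ᵐ[μ] fun _ => κ :=
  stmt11_general μ T hTerg Uop hUopu hKoop a ha ha1 k hweak
end
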